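/- Let D={α, 3α+2β} and let ξ:D→ℂ∖{0} be a map. A linear form λ∈𝔫* belongs to the basic subvariety 𝒪_{D,ξ} if and only if λ_{3α+2β}=ξ(3α+2β) and 2c₅λ_αλ_{3α+2β} − 2c₃λ_{α+β}λ_{3α+β} + c₂λ_{2α+β}² = 2c₅ξ(α)ξ(3α+2β) (with λ_β, λ_{α+β}, λ_{2α+β}, λ_{3α+β} arbitrary). -/

import Mathlib

open scoped RealInnerProductSpace

/-- The exponential of a (nilpotent) endomorphism, as a finite sum. -/
noncomputable def expNil {M : Type*} [AddCommGroup M] [Module ℂ M] (A : Module.End ℂ M) :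
    Module.End ℂ M :=
  ∑ k ∈ Finset.range (nilpotencyClass A), (k.factorial : ℂ)⁻¹ • A ^ k

/-- The coadjoint orbit `Ω_{D,ξ}` of the linear form `f_{D,ξ} = ∑_{γ∈D} ξ(γ) e_γ*`,
consisting of all `f_{D,ξ} ∘ exp(−ad x)`, `x ∈ 𝔫`.  Roots are encoded by indices. -/
noncomputable def coadjointOrbit {ι : Type*} {n : Type*} [LieRing n] [LieAlgebra ℂ n]
    (e : Module.Basis ι ℂ n) (D : Finset ι) (ξ : ι → ℂ) :
    Set (Module.Dual ℂ n) :=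
  {lam | ∃ x : n, lam = (∑ i ∈ D, ξ i • e.coord i).comp (expNil (-(LieAlgebra.ad ℂ n x)))}

/-- The basic subvariety `𝒪_{D,ξ} = Σ_{γ∈D} Ω_{{γ},ξ|{γ}}`. -/
noncomputable def basicSubvariety {ι : Type*} [DecidableEq ι] {n : Type*} [LieRing n] [LieAlgebra ℂ n]
    (e : Module.Basis ι ℂ n) (D : Finset ι) (ξ : ι → ℂ) :
    Set (Module.Dual ℂ n) :=
  {lam | ∃ μ : ι → Module.Dual ℂ n,
    (∀ i ∈ D, μ i ∈ coadjointOrbit e {i} ξ) ∧ lam = ∑ i ∈ D, μ i}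

/-!
The quadratic form `P λ = 2c₅λ_αλ_{3α+2β} − 2c₃λ_{α+β}λ_{3α+β} + c₂λ_{2α+β}²` is a coadjoint
invariant: the Jacobi identity for `e_α, e_β, e_{2α+β}` gives `c₁c₅ = c₃c₄`, which makes every
`ad x` skew for the polar form of `P`, and the exponential of a nilpotent skew operator preserves
the form.

Since `e_α*` vanishes on `[𝔫, 𝔫]`, its orbit is a point. The orbit of `ξ(3α+2β) e_{3α+2β}*` is
the quadric `{λ_{3α+2β} = ξ(3α+2β), P λ = 0}`: for `x` in the span of `e_β, …, e_{3α+β}` the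
operator `exp(−ad x)` moves `e_β, …, e_{3α+β}` only by multiples of the central `e_{3α+2β}`, so
`λ_β, …, λ_{3α+β}` can be prescribed, and then `λ_α` is forced by `P λ = 0`. Finally
`P (ξ(α) e_α* + ν) = P ν + 2c₅ ξ(α) ν_{3α+2β}`.
-/

section expNil

variable {M : Type*} [AddCommGroup M] [Module ℂ M] {A : Module.End ℂ M}

lemma expNil_eq_sum {m : ℕ} (h : A ^ m = 0) :
    expNil A = ∑ k ∈ Finset.range m, (k.factorial : ℂ)⁻¹ • A ^ k := by
  refine Finset.sum_subset (Finset.range_subset_range.2 (Nat.sInf_le h)) fun k _ hk => ?_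
  rw [Finset.mem_range, not_lt] at hk
  rw [pow_eq_zero_of_le hk (pow_nilpotencyClass ⟨m, h⟩), smul_zero]

lemma comp_expNil_eq_sum {N : Type*} [AddCommGroup N] [Module ℂ N] {m : ℕ} (h : A ^ m = 0)
    (f : M →ₗ[ℂ] N) :
    f ∘ₗ expNil A = ∑ k ∈ Finset.range m, (k.factorial : ℂ)⁻¹ • f ∘ₗ A ^ k := by
  ext v
  simp [expNil_eq_sum h, map_sum]

lemma expNil_mul_expNil_neg (hA : IsNilpotent A) : expNil A * expNil (-A) = 1 := by
  -- Restricting scalars along `ℚ → ℂ` makes `IsNilpotent.exp` agree with `expNil`.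
  let _ : Module ℚ (Module.End ℂ M) := Module.compHom _ (algebraMap ℚ ℂ)
  have hexp : ∀ B : Module.End ℂ M, IsNilpotent B → expNil B = IsNilpotent.exp B := by
    rintro B ⟨m, hm⟩
    rw [expNil_eq_sum hm, IsNilpotent.exp_eq_sum hm]
    refine Finset.sum_congr rfl fun k _ => ?_
    change _ = algebraMap ℚ ℂ (k.factorial : ℚ)⁻¹ • B ^ k
    simp
  rw [hexp A hA, hexp (-A) hA.neg, IsNilpotent.exp_mul_exp_neg_self hA]

lemma expNil_apply_of_apply_apply_eq_zero (hA : IsNilpotent A) {v : M} (hv : A (A v) = 0) :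
    expNil A v = v + A v := by
  obtain ⟨m, hm⟩ := hA
  rw [expNil_eq_sum (pow_eq_zero_of_le (Nat.le_add_right m 2) hm), Finset.sum_range_succ',
    Finset.sum_range_succ']
  simp only [pow_succ, zero_add, Nat.factorial_one, Nat.cast_one, inv_one, pow_zero, one_mul,
    one_smul, Nat.factorial_zero, LinearMap.add_apply, LinearMap.coe_sum, LinearMap.coe_smul,
    Finset.sum_apply, Pi.smul_apply, Module.End.mul_apply, hv, map_zero, smul_zero,
    Finset.sum_const_zero, Module.End.one_apply]
  abel

lemma expNil_apply_of_apply_eq_zero (hA : IsNilpotent A) {v : M} (hv : A v = 0) :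
    expNil A v = v := by
  rw [expNil_apply_of_apply_apply_eq_zero hA (by rw [hv, map_zero]), hv, add_zero]

lemma comp_expNil_of_comp_eq_zero {N : Type*} [AddCommGroup N] [Module ℂ N] (hA : IsNilpotent A)
    {f : M →ₗ[ℂ] N} (hf : f ∘ₗ A = 0) : f ∘ₗ expNil A = f := by
  obtain ⟨m, hm⟩ := hA
  have hf' (v : M) : f (A v) = 0 := LinearMap.congr_fun hf v
  ext v
  rw [LinearMap.comp_apply, expNil_eq_sum (pow_eq_zero_of_le (Nat.le_add_right m 1) hm),
    Finset.sum_range_succ']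
  simp [pow_succ', Module.End.mul_apply, hf']

lemma bilinForm_comp_expNil (hA : IsNilpotent A) {Q : LinearMap.BilinForm ℂ (Module.Dual ℂ M)}
    (hQ : ∀ f g, Q (f ∘ₗ A) g = -Q f (g ∘ₗ A)) (f g : Module.Dual ℂ M) :
    Q (f ∘ₗ expNil A) (g ∘ₗ expNil A) = Q f g := by
  have hpow (k : ℕ) : ∀ f g, Q (f ∘ₗ A ^ k) g = Q f (g ∘ₗ (-A) ^ k) := by
    induction k with
    | zero => simp [Module.End.one_eq_id]
    | succ k ih =>
      intro f g
      rw [pow_succ', pow_succ, Module.End.mul_eq_comp, Module.End.mul_eq_comp,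
        ← LinearMap.comp_assoc, ih, hQ, ← LinearMap.comp_assoc, LinearMap.comp_neg, map_neg]
  have hadj : ∀ f g, Q (f ∘ₗ expNil A) g = Q f (g ∘ₗ expNil (-A)) := by
    obtain ⟨m, hm⟩ := hA
    have hm' : (-A) ^ m = 0 := by rw [neg_pow, hm, mul_zero]
    intro f g
    simp [comp_expNil_eq_sum hm, comp_expNil_eq_sum hm', map_sum, hpow]
  rw [hadj, LinearMap.comp_assoc, ← Module.End.mul_eq_comp, expNil_mul_expNil_neg hA,
    Module.End.one_eq_id, LinearMap.comp_id]

end expNil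

section CoadjointOrbit

variable {ι : Type*} {n : Type*} [LieRing n] [LieAlgebra ℂ n] (e : Module.Basis ι ℂ n) (ξ : ι → ℂ)

lemma mem_coadjointOrbit_singleton_iff (i : ι) (μ : Module.Dual ℂ n) :
    μ ∈ coadjointOrbit e {i} ξ ↔
      ∃ x : n, μ = (ξ i • e.coord i) ∘ₗ expNil (-LieAlgebra.ad ℂ n x) := by
  simp only [coadjointOrbit, Finset.sum_singleton, Set.mem_ofPred_eq]

lemma coadjointOrbit_singleton_of_coord_lie_basis_eq_zero
    (hnil : ∀ x : n, IsNilpotent (LieAlgebra.ad ℂ n x)) {i : ι}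
    (hi : ∀ x y : n, e.coord i ⁅x, y⁆ = 0) :
    coadjointOrbit e {i} ξ = {ξ i • e.coord i} := by
  have hfix (x : n) : (ξ i • e.coord i) ∘ₗ expNil (-LieAlgebra.ad ℂ n x) = ξ i • e.coord i := by
    refine comp_expNil_of_comp_eq_zero (hnil x).neg (LinearMap.ext fun y => ?_)
    simp [hi]
  ext μ
  rw [mem_coadjointOrbit_singleton_iff, Set.mem_singleton_iff]
  exact ⟨fun ⟨x, hx⟩ => hx.trans (hfix x), fun hμ => ⟨0, hμ.trans (hfix 0).symm⟩⟩

lemma mem_basicSubvariety_pair_iff [DecidableEq ι] {i j : ι} (hij : i ≠ j)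
    (lam : Module.Dual ℂ n) :
    lam ∈ basicSubvariety e {i, j} ξ ↔
      ∃ μ ∈ coadjointOrbit e {i} ξ, ∃ ν ∈ coadjointOrbit e {j} ξ, lam = μ + ν := by
  constructor
  · rintro ⟨μ, hμ, rfl⟩
    exact ⟨μ i, hμ i (by simp), μ j, hμ j (by simp), Finset.sum_pair hij⟩
  · rintro ⟨μ, hμ, ν, hν, rfl⟩
    refine ⟨fun k => if k = i then μ else ν, fun k hk => ?_, ?_⟩
    · rcases Finset.mem_insert.1 hk with rfl | hk
      · simpa using hμ
      · rw [Finset.mem_singleton.1 hk]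
        simpa [hij.symm] using hν
    · simp [Finset.sum_pair hij, hij.symm]

end CoadjointOrbit

section RootCombinatorics

variable {E : Type*} [NormedAddCommGroup E] [InnerProductSpace ℝ E]

lemma linearIndependent_pair_of_inner_sq_ne {α β : E} (h : ⟪α, β⟫ ^ 2 ≠ ⟪α, α⟫ * ⟪β, β⟫) :
    LinearIndependent ℝ ![α, β] := by
  refine LinearIndependent.pair_iff.2 fun s t hst => ?_
  have hα := congrArg (⟪·, α⟫) hst
  have hβ := congrArg (⟪·, β⟫) hst
  simp only [inner_add_left, real_inner_smul_left, inner_zero_left, real_inner_comm α β] at hα hβ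
  have hs : s * (⟪α, β⟫ ^ 2 - ⟪α, α⟫ * ⟪β, β⟫) = 0 := by
    linear_combination ⟪α, β⟫ * hβ - ⟪β, β⟫ * hα
  have ht : t * (⟪α, β⟫ ^ 2 - ⟪α, α⟫ * ⟪β, β⟫) = 0 := by
    linear_combination ⟪α, β⟫ * hα - ⟪α, α⟫ * hβ
  exact ⟨(mul_eq_zero.1 hs).resolve_right (sub_ne_zero.2 h),
    (mul_eq_zero.1 ht).resolve_right (sub_ne_zero.2 h)⟩

lemma add_mem_range_iff_of_linearIndependent {ι : Type*} {α β : E}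
    (hαβ : LinearIndependent ℝ ![α, β]) {v : ι → E} {p : ι → ℕ × ℕ}
    (hv : ∀ k, v k = ((p k).1 : ℝ) • α + ((p k).2 : ℝ) • β) (i j : ι) :
    v i + v j ∈ Set.range v ↔ ∃ k, p k = p i + p j := by
  have hij : v i + v j = ((p i + p j).1 : ℝ) • α + ((p i + p j).2 : ℝ) • β := by
    simp only [hv, Prod.fst_add, Prod.snd_add, Nat.cast_add]
    module
  refine exists_congr fun k => ?_
  rw [hij, hv]
  constructor
  · intro hk
    obtain ⟨h1, h2⟩ := hαβ.eq_of_pair hk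
    exact Prod.ext (by exact_mod_cast h1) (by exact_mod_cast h2)
  · intro hk
    rw [hk]

end RootCombinatorics

section G2

variable {n : Type*} [LieRing n] [LieAlgebra ℂ n]

def g2Lie (c₁ c₂ c₃ c₄ c₅ : ℂ) (e : Fin 6 → n) : Fin 6 → Fin 6 → n :=
  ![![0, c₁ • e 2, c₂ • e 3, c₃ • e 4, 0, 0],
    ![-(c₁ • e 2), 0, 0, 0, -(c₄ • e 5), 0],
    ![-(c₂ • e 3), 0, 0, c₅ • e 5, 0, 0],
    ![-(c₃ • e 4), 0, -(c₅ • e 5), 0, 0, 0],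
    ![0, c₄ • e 5, 0, 0, 0, 0],
    ![0, 0, 0, 0, 0, 0]]

def HasG2Brackets (e : Module.Basis (Fin 6) ℂ n) (c₁ c₂ c₃ c₄ c₅ : ℂ) : Prop :=
  ∀ i j, ⁅e i, e j⁆ = g2Lie c₁ c₂ c₃ c₄ c₅ e i j

-- `root k = (g2Coeff k).1 • α + (g2Coeff k).2 • β`
def g2Coeff : Fin 6 → ℕ × ℕ := ![(1, 0), (0, 1), (1, 1), (2, 1), (3, 1), (3, 2)]

lemma hasG2Brackets_of_lie {e : Module.Basis (Fin 6) ℂ n} {c₁ c₂ c₃ c₄ c₅ : ℂ}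
    (h01 : ⁅e 0, e 1⁆ = c₁ • e 2) (h02 : ⁅e 0, e 2⁆ = c₂ • e 3) (h03 : ⁅e 0, e 3⁆ = c₃ • e 4)
    (h41 : ⁅e 4, e 1⁆ = c₄ • e 5) (h23 : ⁅e 2, e 3⁆ = c₅ • e 5)
    (hzero : ∀ i j, (¬∃ k, g2Coeff k = g2Coeff i + g2Coeff j) → ⁅e i, e j⁆ = 0) :
    HasG2Brackets e c₁ c₂ c₃ c₄ c₅ := by
  intro i j
  fin_cases i <;> fin_cases j <;> simp [g2Lie]
  all_goals first
    | exact hzero _ _ (by decide)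
    | assumption
    | rw [← lie_skew]; simp [h01, h02, h03, h41, h23]

noncomputable def g2Form (e : Module.Basis (Fin 6) ℂ n) (c₂ c₃ c₅ : ℂ) :
    LinearMap.BilinForm ℂ (Module.Dual ℂ n) :=
  LinearMap.mk₂ ℂ (fun f g => c₅ * (f (e 0) * g (e 5) + f (e 5) * g (e 0))
      - c₃ * (f (e 2) * g (e 4) + f (e 4) * g (e 2)) + c₂ * (f (e 3) * g (e 3)))
    (fun _ _ _ => by simp only [LinearMap.add_apply]; ring)
    (fun _ _ _ => by simp only [LinearMap.smul_apply, smul_eq_mul]; ring)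
    (fun _ _ _ => by simp only [LinearMap.add_apply]; ring)
    (fun _ _ _ => by simp only [LinearMap.smul_apply, smul_eq_mul]; ring)

lemma g2Form_apply (e : Module.Basis (Fin 6) ℂ n) (c₂ c₃ c₅ : ℂ) (f g : Module.Dual ℂ n) :
    g2Form e c₂ c₃ c₅ f g = c₅ * (f (e 0) * g (e 5) + f (e 5) * g (e 0))
      - c₃ * (f (e 2) * g (e 4) + f (e 4) * g (e 2)) + c₂ * (f (e 3) * g (e 3)) :=
  rfl

lemma g2Form_self (e : Module.Basis (Fin 6) ℂ n) (c₂ c₃ c₅ : ℂ) (f : Module.Dual ℂ n) :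
    g2Form e c₂ c₃ c₅ f f =
      2 * c₅ * f (e 0) * f (e 5) - 2 * c₃ * f (e 2) * f (e 4) + c₂ * f (e 3) ^ 2 := by
  rw [g2Form_apply]
  ring

namespace HasG2Brackets

variable {e : Module.Basis (Fin 6) ℂ n} {c₁ c₂ c₃ c₄ c₅ : ℂ}

lemma lie_sum_smul (h : HasG2Brackets e c₁ c₂ c₃ c₄ c₅) (b : Fin 6 → ℂ) (j : Fin 6) :
    ⁅∑ i, b i • e i, e j⁆ = ∑ i, b i • g2Lie c₁ c₂ c₃ c₄ c₅ e i j := by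
  simp only [sum_lie, smul_lie, h _ _]

lemma c₁_mul_c₅_eq_c₃_mul_c₄ (h : HasG2Brackets e c₁ c₂ c₃ c₄ c₅) : c₁ * c₅ = c₃ * c₄ := by
  have jacobi : ⁅e 0, ⁅e 1, e 3⁆⁆ = ⁅⁅e 0, e 1⁆, e 3⁆ + ⁅e 1, ⁅e 0, e 3⁆⁆ := leibniz_lie _ _ _
  simp only [h _ _, g2Lie, Matrix.cons_val', Matrix.cons_val, Matrix.cons_val_fin_one,
    Matrix.cons_val_one, Matrix.cons_val_zero, lie_zero, smul_lie, lie_smul, smul_neg] at jacobi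
  have h5 : (c₁ * c₅ - c₃ * c₄) • e 5 = 0 := by linear_combination (norm := module) -jacobi
  exact sub_eq_zero.1 ((smul_eq_zero.1 h5).resolve_right (e.ne_zero 5))

lemma lie_basis_eq (h : HasG2Brackets e c₁ c₂ c₃ c₄ c₅) (x : n) (j : Fin 6) :
    ⁅x, e j⁆ = ∑ i, e.repr x i • g2Lie c₁ c₂ c₃ c₄ c₅ e i j := by
  conv_lhs => rw [← e.sum_repr x]
  exact h.lie_sum_smul _ j

lemma lie_basis_five (h : HasG2Brackets e c₁ c₂ c₃ c₄ c₅) (x : n) : ⁅x, e 5⁆ = 0 := by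
  simp [h.lie_basis_eq, g2Lie, Fin.sum_univ_six]

lemma coord_zero_lie (h : HasG2Brackets e c₁ c₂ c₃ c₄ c₅) (x y : n) : e.coord 0 ⁅x, y⁆ = 0 := by
  rw [← e.sum_repr y, lie_sum, map_sum]
  refine Finset.sum_eq_zero fun j _ => ?_
  rw [lie_smul, map_smul, h.lie_basis_eq, map_sum]
  fin_cases j <;> simp [g2Lie, Fin.sum_univ_six]

lemma g2Form_comp_ad (h : HasG2Brackets e c₁ c₂ c₃ c₄ c₅) (x : n) (f g : Module.Dual ℂ n) :
    g2Form e c₂ c₃ c₅ (f ∘ₗ LieAlgebra.ad ℂ n x) g =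
      -g2Form e c₂ c₃ c₅ f (g ∘ₗ LieAlgebra.ad ℂ n x) := by
  simp only [g2Form_apply, LinearMap.coe_comp, Function.comp_apply, LieAlgebra.ad_apply,
    h.lie_basis_eq, g2Lie, Matrix.cons_val', Matrix.cons_val_zero, Matrix.cons_val_fin_one,
    Fin.sum_univ_six, smul_zero, Matrix.cons_val_one, smul_neg, zero_add, Matrix.cons_val, add_zero,
    map_add, map_neg, map_smul, smul_eq_mul, map_zero, zero_mul, neg_mul, mul_zero, mul_neg,
    neg_add_rev, neg_sub]
  linear_combination
    (-e.repr x 1 * (f (e 2) * g (e 5) + f (e 5) * g (e 2))) * h.c₁_mul_c₅_eq_c₃_mul_c₄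

lemma g2Form_comp_expNil_ad (h : HasG2Brackets e c₁ c₂ c₃ c₄ c₅)
    (hnil : ∀ x : n, IsNilpotent (LieAlgebra.ad ℂ n x)) (x : n) (f g : Module.Dual ℂ n) :
    g2Form e c₂ c₃ c₅ (f ∘ₗ expNil (-LieAlgebra.ad ℂ n x)) (g ∘ₗ expNil (-LieAlgebra.ad ℂ n x)) =
      g2Form e c₂ c₃ c₅ f g :=
  bilinForm_comp_expNil (hnil x).neg
    (fun f g => by simp only [LinearMap.comp_neg, map_neg, LinearMap.neg_apply, neg_neg,
      h.g2Form_comp_ad]) f g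

lemma expNil_ad_sum_smul_apply (h : HasG2Brackets e c₁ c₂ c₃ c₄ c₅)
    (hnil : ∀ x : n, IsNilpotent (LieAlgebra.ad ℂ n x)) {b : Fin 6 → ℂ} (hb : b 0 = 0)
    {j : Fin 6} (hj : j ≠ 0) :
    expNil (-LieAlgebra.ad ℂ n (∑ i, b i • e i)) (e j) = e j - ⁅∑ i, b i • e i, e j⁆ := by
  rw [expNil_apply_of_apply_apply_eq_zero (hnil _).neg, LinearMap.neg_apply,
    LieAlgebra.ad_apply, sub_eq_add_neg]
  simp only [LinearMap.neg_apply, LieAlgebra.ad_apply, lie_neg, neg_eq_zero, h.lie_sum_smul b j]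
  fin_cases j
  · exact absurd rfl hj
  all_goals simp [g2Lie, Fin.sum_univ_six, hb, h.lie_basis_five]

lemma mem_coadjointOrbit_five_iff (h : HasG2Brackets e c₁ c₂ c₃ c₄ c₅)
    (hnil : ∀ x : n, IsNilpotent (LieAlgebra.ad ℂ n x)) (hc₄ : c₄ ≠ 0) (hc₅ : c₅ ≠ 0)
    {ξ : Fin 6 → ℂ} (hξ₅ : ξ 5 ≠ 0) (ν : Module.Dual ℂ n) :
    ν ∈ coadjointOrbit e {5} ξ ↔ ν (e 5) = ξ 5 ∧ g2Form e c₂ c₃ c₅ ν ν = 0 := by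
  have horbit (μ) (hμ : μ ∈ coadjointOrbit e {5} ξ) :
      μ (e 5) = ξ 5 ∧ g2Form e c₂ c₃ c₅ μ μ = 0 := by
    obtain ⟨x, rfl⟩ := (mem_coadjointOrbit_singleton_iff e ξ 5 μ).1 hμ
    constructor
    · simp [expNil_apply_of_apply_eq_zero (v := e 5) (hnil x).neg (by simp [h.lie_basis_five])]
    · simp [h.g2Form_comp_expNil_ad hnil, g2Form_apply]
  refine ⟨horbit ν, fun ⟨hν5, hνQ⟩ => ?_⟩
  -- For `j = 1, …, 4`, `μ (e j) = -ξ 5 * e.coord 5 ⁅x, e j⁆` is linear in `b`: solve for `ν (e j)`.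
  set b : Fin 6 → ℂ := ![0, ν (e 4) / (ξ 5 * c₄), -ν (e 3) / (ξ 5 * c₅), ν (e 2) / (ξ 5 * c₅),
    -ν (e 1) / (ξ 5 * c₄), 0]
  set μ := (ξ 5 • e.coord 5) ∘ₗ expNil (-LieAlgebra.ad ℂ n (∑ i, b i • e i))
  have hμ : μ ∈ coadjointOrbit e {5} ξ := (mem_coadjointOrbit_singleton_iff e ξ 5 μ).2 ⟨_, rfl⟩
  obtain ⟨hμ5, hμQ⟩ := horbit μ hμ
  have hμν (j : Fin 6) (hj0 : j ≠ 0) (hj5 : j ≠ 5) : μ (e j) = ν (e j) := by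
    simp only [μ, LinearMap.comp_apply, h.expNil_ad_sum_smul_apply hnil (rfl : b 0 = 0) hj0,
      h.lie_sum_smul]
    fin_cases j
    · exact absurd rfl hj0
    all_goals try exact absurd rfl hj5
    all_goals simp [g2Lie, Fin.sum_univ_six, b]; field_simp
  suffices ν = μ by rwa [this]
  refine e.ext fun j => ?_
  by_cases hj0 : j = 0
  · subst hj0
    rw [g2Form_self] at hνQ hμQ
    rw [hμν 2 (by decide) (by decide), hμν 3 (by decide) (by decide),
      hμν 4 (by decide) (by decide), hμ5, ← hν5] at hμQ
    have hne : 2 * c₅ * ν (e 5) ≠ 0 := mul_ne_zero (mul_ne_zero two_ne_zero hc₅) (hν5 ▸ hξ₅)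
    refine mul_left_cancel₀ hne ?_
    linear_combination hνQ - hμQ
  by_cases hj5 : j = 5
  · subst hj5
    exact hν5.trans hμ5.symm
  · exact (hμν j hj0 hj5).symm

end HasG2Brackets

end G2

theorem stmt8_general {n : Type*} [LieRing n] [LieAlgebra ℂ n]
    (α β : EuclideanSpace ℝ (Fin 2))
    (hαα : ⟪α, α⟫ = 1) (hββ : ⟪β, β⟫ = 3) (hαβ : ⟪α, β⟫ = -(3/2))
    -- the six positive roots of `G₂`: `α, β, α+β, 2α+β, 3α+β, 3α+2β`, indexed by `Fin 6`
    (root : Fin 6 → EuclideanSpace ℝ (Fin 2))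
    (hroot : root = ![α, β, α + β, (2:ℝ) • α + β, (3:ℝ) • α + β, (3:ℝ) • α + (2:ℝ) • β])
    (c₁ c₂ c₃ c₄ c₅ : ℂ)
    (hc₄ : c₄ ≠ 0) (hc₅ : c₅ ≠ 0)
    (e : Module.Basis (Fin 6) ℂ n)
    (h01 : ⁅e 0, e 1⁆ = c₁ • e 2)
    (h02 : ⁅e 0, e 2⁆ = c₂ • e 3)
    (h03 : ⁅e 0, e 3⁆ = c₃ • e 4)
    (h41 : ⁅e 4, e 1⁆ = c₄ • e 5)
    (h23 : ⁅e 2, e 3⁆ = c₅ • e 5)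
    (h0 : ∀ i j : Fin 6, root i + root j ∉ Set.range root → ⁅e i, e j⁆ = 0)
    (hnil : ∀ x : n, IsNilpotent (LieAlgebra.ad ℂ n x))
    (ξ : Fin 6 → ℂ) (hξ₅ : ξ 5 ≠ 0)
    (lam : Module.Dual ℂ n) :
    lam ∈ basicSubvariety e {0, 5} ξ ↔
      (lam (e 5) = ξ 5 ∧
        2 * c₅ * lam (e 0) * lam (e 5) - 2 * c₃ * lam (e 2) * lam (e 4) +
          c₂ * lam (e 3) ^ 2 = 2 * c₅ * ξ 0 * ξ 5) := by
  have hαβ_indep : LinearIndependent ℝ ![α, β] :=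
    linearIndependent_pair_of_inner_sq_ne (by rw [hαα, hββ, hαβ]; norm_num)
  have hcoeff (k : Fin 6) : root k = ((g2Coeff k).1 : ℝ) • α + ((g2Coeff k).2 : ℝ) • β := by
    fin_cases k <;> simp [hroot, g2Coeff]
  have h : HasG2Brackets e c₁ c₂ c₃ c₄ c₅ := hasG2Brackets_of_lie h01 h02 h03 h41 h23
    fun i j hij => h0 i j ((add_mem_range_iff_of_linearIndependent hαβ_indep hcoeff i j).not.2 hij)
  rw [mem_basicSubvariety_pair_iff e ξ (by decide),
    coadjointOrbit_singleton_of_coord_lie_basis_eq_zero e ξ hnil h.coord_zero_lie]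
  simp only [Set.mem_singleton_iff, exists_eq_left, h.mem_coadjointOrbit_five_iff hnil hc₄ hc₅ hξ₅,
    g2Form_self]
  constructor
  · rintro ⟨ν, ⟨hν5, hνQ⟩, rfl⟩
    simp only [Fin.isValue, LinearMap.add_apply, LinearMap.smul_apply, Module.Basis.coord_apply,
      Module.Basis.repr_self, ne_eq, Fin.reduceEq, not_false_eq_true, Finsupp.single_eq_of_ne,
      smul_eq_mul, mul_zero, hν5, zero_add, Finsupp.single_eq_same, mul_one, true_and]
    linear_combination hνQ - 2 * c₅ * ν (e 0) * hν5
  · rintro ⟨h5, hlam⟩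
    refine ⟨lam - ξ 0 • e.coord 0, ⟨by simp [h5], ?_⟩, by abel⟩
    simp only [Fin.isValue, LinearMap.sub_apply, LinearMap.smul_apply, Module.Basis.coord_apply,
      Module.Basis.repr_self, Finsupp.single_eq_same, smul_eq_mul, mul_one, ne_eq, Fin.reduceEq,
      not_false_eq_true, Finsupp.single_eq_of_ne, mul_zero, sub_zero]
    linear_combination hlam - 2 * c₅ * ξ 0 * h5

theorem stmt8 {n : Type*} [LieRing n] [LieAlgebra ℂ n]
    (α β : EuclideanSpace ℝ (Fin 2))
    (hαα : ⟪α, α⟫ = 1) (hββ : ⟪β, β⟫ = 3) (hαβ : ⟪α, β⟫ = -(3/2))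
    -- the six positive roots of `G₂`: `α, β, α+β, 2α+β, 3α+β, 3α+2β`, indexed by `Fin 6`
    (root : Fin 6 → EuclideanSpace ℝ (Fin 2))
    (hroot : root = ![α, β, α + β, (2:ℝ) • α + β, (3:ℝ) • α + β, (3:ℝ) • α + (2:ℝ) • β])
    (c₁ c₂ c₃ c₄ c₅ : ℂ)
    (hc₁ : c₁ ≠ 0) (hc₂ : c₂ ≠ 0) (hc₃ : c₃ ≠ 0) (hc₄ : c₄ ≠ 0) (hc₅ : c₅ ≠ 0)
    (e : Module.Basis (Fin 6) ℂ n)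
    (h01 : ⁅e 0, e 1⁆ = c₁ • e 2)
    (h02 : ⁅e 0, e 2⁆ = c₂ • e 3)
    (h03 : ⁅e 0, e 3⁆ = c₃ • e 4)
    (h41 : ⁅e 4, e 1⁆ = c₄ • e 5)
    (h23 : ⁅e 2, e 3⁆ = c₅ • e 5)
    (h0 : ∀ i j : Fin 6, root i + root j ∉ Set.range root → ⁅e i, e j⁆ = 0)
    (hnil : ∀ x : n, IsNilpotent (LieAlgebra.ad ℂ n x))
    (ξ : Fin 6 → ℂ) (hξ₀ : ξ 0 ≠ 0) (hξ₅ : ξ 5 ≠ 0)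
    (lam : Module.Dual ℂ n) :
    lam ∈ basicSubvariety e {0, 5} ξ ↔
      (lam (e 5) = ξ 5 ∧
        2 * c₅ * lam (e 0) * lam (e 5) - 2 * c₃ * lam (e 2) * lam (e 4) +
          c₂ * lam (e 3) ^ 2 = 2 * c₅ * ξ 0 * ξ 5) :=
  stmt8_general α β hαα hββ hαβ root hroot c₁ c₂ c₃ c₄ c₅ hc₄ hc₅ e h01 h02 h03 h41 h23 h0 hnil ξ
    hξ₅ lam
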